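/- Let F be a set of skew-decomposable permutations and X = Avs(F) the class of separable permutations avoiding all elements of F. Then D[X] = Avs((F ⊕ 1) ∪ (1 ⊕ F)), where D is the class of decreasing permutations. -/

import Mathlib

/-- A permutation of some finite length `n`, as a bijection of `Fin n`. -/
abbrev PPerm : Type := Σ n : ℕ, Equiv.Perm (Fin n)

/-- `Contains π σ` : the pattern `σ` occurs in (is contained in) `π`. -/
def Contains (π σ : PPerm) : Prop :=
  ∃ f : Fin σ.1 → Fin π.1, StrictMono f ∧
    ∀ i j, σ.2 i < σ.2 j ↔ π.2 (f i) < π.2 (f j)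

/-- A permutation class: a set of permutations closed downwards under containment. -/
def IsPermClass (C : Set PPerm) : Prop :=
  ∀ π ∈ C, ∀ σ : PPerm, Contains π σ → σ ∈ C

/-- `σ` is (exactly) the pattern of the set `S` of points of `π`. -/
def PatternOf (π : PPerm) (S : Set (Fin π.1)) (σ : PPerm) : Prop :=
  ∃ f : Fin σ.1 → Fin π.1, StrictMono f ∧ Set.range f = S ∧
    ∀ i j, σ.2 i < σ.2 j ↔ π.2 (f i) < π.2 (f j)

/-- The points of `π` lying in `S` contain an occurrence of `σ`. -/
def ContainsIn (π : PPerm) (S : Set (Fin π.1)) (σ : PPerm) : Prop :=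
  ∃ f : Fin σ.1 → Fin π.1, StrictMono f ∧ (∀ i, f i ∈ S) ∧
    ∀ i j, σ.2 i < σ.2 j ↔ π.2 (f i) < π.2 (f j)

/-- `π` is a merge of `σ` and `τ`: its points split into a part with pattern `σ`
and a part with pattern `τ`. -/
def IsMerge (π σ τ : PPerm) : Prop :=
  ∃ S : Set (Fin π.1), PatternOf π S σ ∧ PatternOf π Sᶜ τ

/-- Merge of two classes. -/
def MergeCl (C D : Set PPerm) : Set PPerm :=
  {π | ∃ σ ∈ C, ∃ τ ∈ D, IsMerge π σ τ}

/-- The empty permutation. -/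
def pempty : PPerm := ⟨0, 1⟩

/-- The singleton permutation `1`. -/
def pone : PPerm := ⟨1, 1⟩

/-- Iterated merge of a list of classes. -/
def MergeAll : List (Set PPerm) → Set PPerm
  | [] => {pempty}
  | [C] => C
  | C :: D :: Cs => MergeCl C (MergeAll (D :: Cs))

/-- A class is splittable if it is contained in the merge of finitely many
of its proper subclasses. -/
def Splittable (C : Set PPerm) : Prop :=
  ∃ Cs : List (Set PPerm), Cs ≠ [] ∧
    (∀ D ∈ Cs, IsPermClass D ∧ D ⊆ C ∧ D ≠ C) ∧ C ⊆ MergeAll Cs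

/-- A class is atomic if it is not the union of two proper subclasses. -/
def Atomic (C : Set PPerm) : Prop :=
  ¬ ∃ D E : Set PPerm, IsPermClass D ∧ IsPermClass E ∧
      D ⊆ C ∧ D ≠ C ∧ E ⊆ C ∧ E ≠ C ∧ C = D ∪ E

/-- Inflation `A[B]` of a class `A` by a class `B`: `π` decomposes into
consecutive nonempty blocks (given by the fibres of the monotone surjection `g`),
the relative order of distinct blocks follows `σ ∈ A`, and each block has its
pattern in `B`. -/
def Inflate (A B : Set PPerm) : Set PPerm :=
  {π | ∃ σ ∈ A, ∃ g : Fin π.1 → Fin σ.1, Monotone g ∧ Function.Surjective g ∧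
    (∀ p q, g p ≠ g q → (π.2 p < π.2 q ↔ σ.2 (g p) < σ.2 (g q))) ∧
    ∀ b : Fin σ.1, ∃ τ ∈ B, PatternOf π {p | g p = b} τ}

/-- Direct sum `σ ⊕ τ`. -/
def psum (σ τ : PPerm) : PPerm :=
  ⟨σ.1 + τ.1, finSumFinEquiv.permCongr (σ.2.sumCongr τ.2)⟩

/-- Skew sum `σ ⊖ τ`. -/
def pskew (σ τ : PPerm) : PPerm :=
  ⟨σ.1 + τ.1,
    finSumFinEquiv.symm.trans ((σ.2.sumCongr τ.2).trans
      ((Equiv.sumComm (Fin σ.1) (Fin τ.1)).trans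
        (finSumFinEquiv.trans (finCongr (Nat.add_comm τ.1 σ.1)))))⟩

/-- Sum-decomposable: a direct sum of two nonempty permutations. -/
def SumDecomp (π : PPerm) : Prop :=
  ∃ σ τ : PPerm, 0 < σ.1 ∧ 0 < τ.1 ∧ π = psum σ τ

/-- Skew-decomposable: a skew sum of two nonempty permutations. -/
def SkewDecomp (π : PPerm) : Prop :=
  ∃ σ τ : PPerm, 0 < σ.1 ∧ 0 < τ.1 ∧ π = pskew σ τ

def SumClosed (C : Set PPerm) : Prop := ∀ σ ∈ C, ∀ τ ∈ C, psum σ τ ∈ C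

def SkewClosed (C : Set PPerm) : Prop := ∀ σ ∈ C, ∀ τ ∈ C, pskew σ τ ∈ C

/-- The class of permutations avoiding the pattern `σ`. -/
def Av (σ : PPerm) : Set PPerm := {π | ¬ Contains π σ}

/-- The basis of a class: minimal permutations not belonging to it. -/
def PBasis (C : Set PPerm) : Set PPerm :=
  {π | π ∉ C ∧ ∀ σ : PPerm, Contains π σ → σ ≠ π → σ ∈ C}

/-- An interval of `π`: a set of points contiguous in positions and in values. -/
def IsInterval (π : PPerm) (S : Set (Fin π.1)) : Prop :=
  (∀ a ∈ S, ∀ b ∈ S, ∀ c, a ≤ c → c ≤ b → c ∈ S) ∧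
  (∀ a ∈ S, ∀ b ∈ S, ∀ c, π.2 a ≤ π.2 c → π.2 c ≤ π.2 b → c ∈ S)

/-- A simple permutation: its only intervals are the subsingletons and the whole. -/
def SimplePerm (π : PPerm) : Prop :=
  ∀ S : Set (Fin π.1), IsInterval π S → S.Subsingleton ∨ S = Set.univ

/-- Build a permutation from a function with an explicit inverse. -/
def mkP {n : ℕ} (f g : Fin n → Fin n)
    (h₁ : ∀ i, g (f i) = i) (h₂ : ∀ i, f (g i) = i) : PPerm :=
  ⟨n, ⟨f, g, h₁, h₂⟩⟩

def p12 : PPerm := ⟨2, 1⟩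
def p21 : PPerm := mkP ![1,0] ![1,0] (by decide) (by decide)
def p213 : PPerm := mkP ![1,0,2] ![1,0,2] (by decide) (by decide)
def p231 : PPerm := mkP ![1,2,0] ![2,0,1] (by decide) (by decide)
def p312 : PPerm := mkP ![2,0,1] ![1,2,0] (by decide) (by decide)
def p1234 : PPerm := ⟨4, 1⟩
def p2143 : PPerm := mkP ![1,0,3,2] ![1,0,3,2] (by decide) (by decide)
def p3412 : PPerm := mkP ![2,3,0,1] ![2,3,0,1] (by decide) (by decide)
def p4321 : PPerm := mkP ![3,2,1,0] ![3,2,1,0] (by decide) (by decide)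
def p2413 : PPerm := mkP ![1,3,0,2] ![2,0,3,1] (by decide) (by decide)
def p3142 : PPerm := mkP ![2,0,3,1] ![1,3,0,2] (by decide) (by decide)

/-- The class `I` of increasing permutations. -/
def IncCl : Set PPerm := Av p21
/-- The class `D` of decreasing permutations. -/
def DecCl : Set PPerm := Av p12
/-- The class `Av(213)`. -/
def Av213 : Set PPerm := Av p213
/-- The class `L = Av(231, 312)` of layered permutations. -/
def Layered : Set PPerm := Av p231 ∩ Av p312
/-- Separable permutations, characterised by avoidance of `2413` and `3142`. -/
def SepA : Set PPerm := Av p2413 ∩ Av p3142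
/-- Separable permutations avoiding every element of `F`. -/
def Avs (F : Set PPerm) : Set PPerm := {π ∈ SepA | ∀ τ ∈ F, ¬ Contains π τ}
/-- The class of separable permutations, defined as the smallest permutation class
containing `1` and closed under direct sums and skew sums. -/
def SepCl : Set PPerm :=
  ⋂₀ {C : Set PPerm | IsPermClass C ∧ pone ∈ C ∧
      ∀ σ ∈ C, ∀ τ ∈ C, psum σ τ ∈ C ∧ pskew σ τ ∈ C}
/-!
An element of `D[X]` is a sequence of blocks from `X` placed in decreasing order, so an increasing
pair of points always lies in one block. Hence an occurrence of `τ ⊕ 1` or `1 ⊕ τ` lies in a single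
block, which then contains `τ`; and an occurrence of a pattern without skew cut, such as `2413` or
`3142`, also lies in a single block.

Conversely, cut `π` at all its skew cuts. A piece `B` without skew cut is separable, so if it has
two or more points it has a sum cut (separable permutations are decomposable: add the last point
and use `3142`/`2413`-avoidance to see that the points above it form a final segment). A
skew-decomposable `τ ∈ F` has no sum cut, so an occurrence of `τ` in `B` lies on one side of the
sum cut, and the other side provides the extra point of an occurrence of `τ ⊕ 1` or `1 ⊕ τ`.
-/

open OrderDual Function

variable {π σ τ ρ : PPerm}

theorem Contains.trans (h₁ : Contains π σ) (h₂ : Contains σ ρ) : Contains π ρ := by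
  obtain ⟨f, hf, hfπ⟩ := h₁
  obtain ⟨g, hg, hgσ⟩ := h₂
  exact ⟨f ∘ g, hf.comp hg, fun i j => (hgσ i j).trans (hfπ _ _)⟩

theorem sepA_of_contains (hπ : π ∈ SepA) (h : Contains π σ) : σ ∈ SepA :=
  ⟨fun h' => hπ.1 (h.trans h'), fun h' => hπ.2 (h.trans h')⟩

theorem ContainsIn.mono {S T : Set (Fin π.1)} (h : ContainsIn π S σ) (hST : S ⊆ T) :
    ContainsIn π T σ :=
  let ⟨f, hf, hfS, hfπ⟩ := h; ⟨f, hf, fun i => hST (hfS i), hfπ⟩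

theorem PatternOf.contains_iff {S : Set (Fin π.1)} (hσ : PatternOf π S σ) :
    Contains σ ρ ↔ ContainsIn π S ρ := by
  obtain ⟨f, hf, rfl, hfπ⟩ := hσ
  constructor
  · rintro ⟨g, hg, hgσ⟩
    exact ⟨f ∘ g, hf.comp hg, fun i => ⟨g i, rfl⟩, fun i j => (hgσ i j).trans (hfπ _ _)⟩
  · rintro ⟨h, hh, hhS, hhπ⟩
    choose g hg using hhS
    refine ⟨g, fun i j hij => hf.lt_iff_lt.mp (by simpa only [hg] using hh hij), fun i j => ?_⟩
    rw [hhπ, ← hg i, ← hg j, hfπ]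

theorem PatternOf.contains {S : Set (Fin π.1)} (hσ : PatternOf π S σ) : Contains π σ :=
  let ⟨f, hf, _, hfπ⟩ := hσ; ⟨f, hf, hfπ⟩

theorem exists_patternOf (π : PPerm) (S : Set (Fin π.1)) : ∃ σ, PatternOf π S σ := by
  classical
  set T := S.toFinset
  have hcard : (T.image π.2).card = T.card := T.card_image_of_injective π.2.injective
  let pos := T.orderIsoOfFin rfl
  let val := (T.image π.2).orderIsoOfFin hcard
  let mid : T ≃ T.image π.2 := π.2.subtypeEquiv fun p => (π.2.injective.mem_finset_image).symm
  refine ⟨⟨T.card, pos.toEquiv.trans (mid.trans val.symm.toEquiv)⟩,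
    fun i => (pos i : Fin π.1), fun i j hij => pos.strictMono hij, ?_, fun i j => ?_⟩
  · ext p
    exact ⟨fun ⟨i, hi⟩ => hi ▸ Set.mem_toFinset.mp (pos i).2,
      fun hp => ⟨pos.symm ⟨p, Set.mem_toFinset.mpr hp⟩, by simp⟩⟩
  · change val.symm (mid (pos i)) < val.symm (mid (pos j)) ↔ _
    rw [val.symm.lt_iff_lt, ← Subtype.coe_lt_coe]
    rfl

theorem psum_apply_castAdd (σ τ : PPerm) (i : Fin σ.1) :
    (psum σ τ).2 (Fin.castAdd τ.1 i) = Fin.castAdd τ.1 (σ.2 i) := by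
  change finSumFinEquiv (σ.2.sumCongr τ.2 (finSumFinEquiv.symm (Fin.castAdd τ.1 i))) = _
  simp

theorem psum_apply_natAdd (σ τ : PPerm) (j : Fin τ.1) :
    (psum σ τ).2 (Fin.natAdd σ.1 j) = Fin.natAdd σ.1 (τ.2 j) := by
  change finSumFinEquiv (σ.2.sumCongr τ.2 (finSumFinEquiv.symm (Fin.natAdd σ.1 j))) = _
  simp

theorem pskew_apply_castAdd (σ τ : PPerm) (i : Fin σ.1) :
    ((pskew σ τ).2 (Fin.castAdd τ.1 i) : ℕ) = τ.1 + σ.2 i := by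
  change (finSumFinEquiv (Equiv.sumComm _ _ (σ.2.sumCongr τ.2
    (finSumFinEquiv.symm (Fin.castAdd τ.1 i)))) : ℕ) = _
  simp

theorem pskew_apply_natAdd (σ τ : PPerm) (j : Fin τ.1) :
    ((pskew σ τ).2 (Fin.natAdd σ.1 j) : ℕ) = τ.2 j := by
  change (finSumFinEquiv (Equiv.sumComm _ _ (σ.2.sumCongr τ.2
    (finSumFinEquiv.symm (Fin.natAdd σ.1 j)))) : ℕ) = _
  simp

theorem Fin.castAdd_lt_natAdd {m n : ℕ} (i : Fin m) (j : Fin n) :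
    Fin.castAdd n i < Fin.natAdd m j := by
  rw [Fin.lt_def, Fin.val_castAdd, Fin.val_natAdd]; omega

section PsumOrder

variable (σ τ : PPerm) (i i' : Fin σ.1) (j j' : Fin τ.1)

theorem psum_castAdd_lt_castAdd :
    (psum σ τ).2 (Fin.castAdd τ.1 i) < (psum σ τ).2 (Fin.castAdd τ.1 i') ↔ σ.2 i < σ.2 i' := by
  rw [psum_apply_castAdd, psum_apply_castAdd]; exact (Fin.strictMono_castAdd _).lt_iff_lt

theorem psum_natAdd_lt_natAdd :
    (psum σ τ).2 (Fin.natAdd σ.1 j) < (psum σ τ).2 (Fin.natAdd σ.1 j') ↔ τ.2 j < τ.2 j' := by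
  rw [psum_apply_natAdd, psum_apply_natAdd]; exact (Fin.strictMono_natAdd _).lt_iff_lt

theorem psum_castAdd_lt_natAdd :
    (psum σ τ).2 (Fin.castAdd τ.1 i) < (psum σ τ).2 (Fin.natAdd σ.1 j) := by
  rw [psum_apply_castAdd, psum_apply_natAdd]; exact Fin.castAdd_lt_natAdd _ _

end PsumOrder

theorem contains_psum_iff : Contains π (psum σ τ) ↔ ∃ S T : Set (Fin π.1),
    (∀ p ∈ S, ∀ q ∈ T, p < q ∧ π.2 p < π.2 q) ∧ ContainsIn π S σ ∧ ContainsIn π T τ := by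
  constructor
  · rintro ⟨f, hf, hfπ⟩
    refine ⟨Set.range fun i => f (Fin.castAdd τ.1 i), Set.range fun j => f (Fin.natAdd σ.1 j), ?_,
      ⟨fun i => f (Fin.castAdd τ.1 i), hf.comp (Fin.strictMono_castAdd _), fun i => ⟨i, rfl⟩,
        fun i i' => (psum_castAdd_lt_castAdd σ τ i i').symm.trans (hfπ _ _)⟩,
      ⟨fun j => f (Fin.natAdd σ.1 j), hf.comp (Fin.strictMono_natAdd _), fun j => ⟨j, rfl⟩,
        fun j j' => (psum_natAdd_lt_natAdd σ τ j j').symm.trans (hfπ _ _)⟩⟩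
    rintro _ ⟨i, rfl⟩ _ ⟨j, rfl⟩
    exact ⟨hf (Fin.castAdd_lt_natAdd i j), (hfπ _ _).mp (psum_castAdd_lt_natAdd σ τ i j)⟩
  · rintro ⟨S, T, hST, ⟨f, hf, hfS, hfπ⟩, ⟨g, hg, hgT, hgπ⟩⟩
    have hfg i j := hST _ (hfS i) _ (hgT j)
    refine ⟨Fin.append f g, fun x y hxy => ?_, fun x y => ?_⟩
    · induction x using Fin.addCases <;> induction y using Fin.addCases
      · simpa using hf ((Fin.strictMono_castAdd _).lt_iff_lt.mp hxy)
      · simpa using (hfg _ _).1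
      · exact absurd hxy (Fin.castAdd_lt_natAdd _ _).asymm
      · simpa using hg ((Fin.strictMono_natAdd _).lt_iff_lt.mp hxy)
    · induction x using Fin.addCases <;> induction y using Fin.addCases
      · simpa [psum_castAdd_lt_castAdd] using hfπ _ _
      · simpa [psum_castAdd_lt_natAdd] using (hfg _ _).2
      · simpa [(psum_castAdd_lt_natAdd σ τ _ _).asymm] using (hfg _ _).2.asymm
      · simpa [psum_natAdd_lt_natAdd] using hgπ _ _

theorem containsIn_pone_iff {S : Set (Fin π.1)} : ContainsIn π S pone ↔ S.Nonempty := by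
  constructor
  · rintro ⟨f, -, hfS, -⟩
    exact ⟨f ⟨0, by decide⟩, hfS _⟩
  · rintro ⟨p, hp⟩
    have : Subsingleton (Fin pone.1) := Fin.subsingleton_one
    exact ⟨fun _ => p, fun i j hij => absurd (Subsingleton.elim i j) hij.ne, fun _ => hp,
      fun i j => by rw [Subsingleton.elim i j]; exact iff_of_false (lt_irrefl _) (lt_irrefl _)⟩

theorem contains_psum_pone_iff :
    Contains π (psum σ pone) ↔ ∃ m, ContainsIn π {p | p < m ∧ π.2 p < π.2 m} σ := by
  rw [contains_psum_iff]
  constructor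
  · rintro ⟨S, T, hST, hS, hT⟩
    obtain ⟨m, hm⟩ := containsIn_pone_iff.mp hT
    exact ⟨m, hS.mono fun p hp => hST p hp m hm⟩
  · rintro ⟨m, hm⟩
    exact ⟨_, {m}, fun p hp q hq => hq ▸ hp, hm, containsIn_pone_iff.mpr ⟨m, rfl⟩⟩

theorem contains_pone_psum_iff :
    Contains π (psum pone σ) ↔ ∃ m, ContainsIn π {p | m < p ∧ π.2 m < π.2 p} σ := by
  rw [contains_psum_iff]
  constructor
  · rintro ⟨S, T, hST, hS, hT⟩
    obtain ⟨m, hm⟩ := containsIn_pone_iff.mp hS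
    exact ⟨m, hT.mono fun p hp => hST m hm p hp⟩
  · rintro ⟨m, hm⟩
    exact ⟨{m}, _, fun p hp q hq => (Set.mem_singleton_iff.mp hp) ▸ hq,
      containsIn_pone_iff.mpr ⟨m, rfl⟩, hm⟩

theorem contains_of_strictMono (f : Fin σ.1 → Fin π.1) (hf : StrictMono f)
    (hv : StrictMono (π.2 ∘ f ∘ σ.2.symm)) : Contains π σ := by
  refine ⟨f, hf, fun i j => ⟨fun h => by simpa using hv h, fun h => ?_⟩⟩
  by_contra h'
  have := hv.monotone (not_lt.mp h')
  simp only [comp_apply, Equiv.symm_apply_apply] at this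
  exact (not_le.mpr h) this

theorem mem_decCl_iff : σ ∈ DecCl ↔ ∀ i j : Fin σ.1, i < j → σ.2 j < σ.2 i := by
  constructor
  · intro h i j hij
    refine lt_of_not_ge fun hle => h (contains_of_strictMono (σ := p12) ![i, j] ?_ ?_)
    · change StrictMono (![i, j] : Fin 2 → _)
      rw [Fin.strictMono_iff_lt_succ]; intro k; fin_cases k; simpa using hij
    · change StrictMono (σ.2 ∘ (![i, j] : Fin 2 → _) ∘ id)
      rw [Fin.strictMono_iff_lt_succ]; intro k; fin_cases k
      simpa using lt_of_le_of_ne hle (σ.2.injective.ne hij.ne)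
  · rintro h ⟨f, hf, hfσ⟩
    have h01 : (⟨0, by decide⟩ : Fin p12.1) < ⟨1, by decide⟩ := by decide
    exact ((hfσ _ _).mp h01).asymm (h _ _ (hf h01))

section Cuts

variable {N : ℕ} {α : Type*} [LinearOrder α]

-- Stated over an arbitrary linear order so that passing to `αᵒᵈ` turns `3142` into `2413` and
-- sum cuts into skew cuts.
def Avoids3142 (v : Fin N → α) : Prop :=
  ∀ a b c d : Fin N, a < b → b < c → c < d → ¬(v b < v d ∧ v d < v a ∧ v a < v c)

def IsSumCut (v : Fin N → α) (a n c : ℕ) : Prop :=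
  ∀ p q : Fin N, a ≤ p → (p : ℕ) < c → c ≤ q → (q : ℕ) < n → v p < v q

def IsSkewCut (v : Fin N → α) (a n c : ℕ) : Prop :=
  ∀ p q : Fin N, a ≤ p → (p : ℕ) < c → c ≤ q → (q : ℕ) < n → v q < v p

variable {v : Fin N → α} {a n c d : ℕ}

theorem IsSumCut.not_isSkewCut (hc : IsSumCut v a n c) (hn : n ≤ N) (hac : a < c) (hcn : c < n)
    (had : a < d) (hdn : d < n) : ¬IsSkewCut v a n d := fun hd =>
  (hc ⟨a, by omega⟩ ⟨n - 1, by omega⟩ le_rfl hac (by simp; omega) (by simp; omega)).asymm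
    (hd ⟨a, by omega⟩ ⟨n - 1, by omega⟩ le_rfl had (by simp; omega) (by simp; omega))

theorem exists_threshold {P : Fin N → Prop}
    (hP : ∀ p q : Fin N, a ≤ p → p ≤ q → (q : ℕ) < n → P p → P q) :
    ∃ k : ℕ, ∀ p : Fin N, a ≤ p → (p : ℕ) < n → (P p ↔ k ≤ p) := by
  classical
  have hex : ∃ k, ∀ q : Fin N, k ≤ (q : ℕ) → (q : ℕ) < n → P q :=
    ⟨n, fun q h₁ h₂ => absurd h₂ (not_lt.mpr h₁)⟩
  exact ⟨Nat.find hex, fun p hap hpn => ⟨fun hp => Nat.find_min' hex fun q hpq hqn =>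
    hP p q hap (Fin.le_iff_val_le_val.mpr hpq) hqn hp, fun hk => Nat.find_spec hex p hk hpn⟩⟩

theorem IsSumCut.extend (hv : Injective v) (h3142 : Avoids3142 v) (hn : n < N) (hac : a < c)
    (hcn : c < n) (hcut : IsSumCut v a n c) :
    ∃ c', a < c' ∧ c' < n + 1 ∧ (IsSumCut v a (n + 1) c' ∨ IsSkewCut v a (n + 1) c') := by
  set z : Fin N := ⟨n, hn⟩
  have hz : ∀ q : Fin N, (q : ℕ) < n + 1 → n ≤ q → q = z := fun q h₁ h₂ =>
    Fin.ext (by simp [z]; omega)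
  have hne : ∀ p : Fin N, (p : ℕ) < n → v p ≠ v z := fun p hp h => by
    have := congrArg Fin.val (hv h); simp [z] at this; omega
  by_cases hlow : ∀ p : Fin N, a ≤ p → (p : ℕ) < c → v p < v z
  · refine ⟨c, hac, by omega, Or.inl fun p q hap hpc hcq hqn => ?_⟩
    rcases lt_or_ge (q : ℕ) n with hq | hq
    · exact hcut p q hap hpc hcq hq
    · rw [hz q hqn hq]; exact hlow p hap hpc
  push Not at hlow
  obtain ⟨p₀, hap₀, hp₀c, hp₀⟩ := hlow
  replace hp₀ : v z < v p₀ := lt_of_le_of_ne hp₀ (hne p₀ (by omega)).symm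
  have hupper : ∀ q : Fin N, c ≤ (q : ℕ) → (q : ℕ) < n → v z < v q := fun q h₁ h₂ =>
    hp₀.trans (hcut p₀ q hap₀ hp₀c h₁ h₂)
  -- the points of `[a, n)` above `z` form a final segment, since otherwise they give a `3142`
  -- ending at `z`
  have hclosed : ∀ p q : Fin N, a ≤ p → p ≤ q → (q : ℕ) < n → v z < v p → v z < v q := by
    intro p q hap hpq hqn hp
    by_contra hq
    have hqz : v q < v z := lt_of_le_of_ne (not_lt.mp hq) (hne q hqn)
    have hqc : (q : ℕ) < c := by by_contra; exact hq (hupper q (by omega) hqn)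
    have hpq' : p < q := lt_of_le_of_ne hpq (by rintro rfl; exact hq hp)
    exact h3142 p q ⟨c, by omega⟩ z hpq' hqc hcn
      ⟨hqz, hp, hcut p ⟨c, by omega⟩ hap (by omega) le_rfl hcn⟩
  obtain ⟨k, hk⟩ := exists_threshold hclosed
  have hkc : k ≤ c := (hk ⟨c, by omega⟩ (by simp; omega) hcn).mp (hupper _ le_rfl hcn)
  rcases le_or_gt k a with hka | hak
  · refine ⟨n, by omega, by omega, Or.inr fun p q hap hpn hnq hqn => ?_⟩
    rw [hz q hqn hnq]
    exact (hk p hap hpn).mpr (by omega)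
  · refine ⟨k, hak, by omega, Or.inl fun p q hap hpk hkq hqn => ?_⟩
    have hpz : v p < v z :=
      lt_of_le_of_ne (not_lt.mp fun h => by have := (hk p hap (by omega)).mp h; omega)
        (hne p (by omega))
    rcases lt_or_ge (q : ℕ) n with hq | hq
    · exact hpz.trans ((hk q (by omega) hq).mpr hkq)
    · rw [hz q hqn hq]; exact hpz

theorem exists_cut (hv : Injective v) (h₁ : Avoids3142 v) (h₂ : Avoids3142 (toDual ∘ v))
    (han : a + 2 ≤ n) (hn : n ≤ N) :
    ∃ c, a < c ∧ c < n ∧ (IsSumCut v a n c ∨ IsSkewCut v a n c) := by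
  induction n, han using Nat.le_induction with
  | base =>
    have hpq : ∀ p q : Fin N, a ≤ p → (p : ℕ) < a + 1 → a + 1 ≤ q → (q : ℕ) < a + 2 →
        p = ⟨a, by omega⟩ ∧ q = ⟨a + 1, hn⟩ := fun p q h₁ h₂ h₃ h₄ =>
      ⟨Fin.ext (by simp; omega), Fin.ext (by simp; omega)⟩
    refine ⟨a + 1, by omega, by omega, ?_⟩
    rcases lt_or_gt_of_ne (hv.ne (a₁ := ⟨a, by omega⟩) (a₂ := ⟨a + 1, hn⟩) (by simp)) with h | h
    · exact Or.inl fun p q h₁ h₂ h₃ h₄ => by obtain ⟨rfl, rfl⟩ := hpq p q h₁ h₂ h₃ h₄; exact h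
    · exact Or.inr fun p q h₁ h₂ h₃ h₄ => by obtain ⟨rfl, rfl⟩ := hpq p q h₁ h₂ h₃ h₄; exact h
  | succ n han ih =>
    obtain ⟨c, hac, hcn, hc | hc⟩ := ih (by omega)
    · exact hc.extend hv h₁ (by omega) hac hcn
    · obtain ⟨c', h₁, h₂, h⟩ := IsSumCut.extend (v := toDual ∘ v)
        (OrderDual.toDual.injective.comp hv) h₂ (by omega) hac hcn hc
      exact ⟨c', h₁, h₂, h.symm⟩

end Cuts

theorem avoids3142_of_mem_av (h : π ∈ Av p3142) : Avoids3142 π.2 := by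
  rintro a b c d hab hbc hcd ⟨h₁, h₂, h₃⟩
  refine h (contains_of_strictMono (σ := p3142) ![a, b, c, d] ?_ ?_)
  · change StrictMono (![a, b, c, d] : Fin 4 → _)
    rw [Fin.strictMono_iff_lt_succ]; intro k; fin_cases k <;> simpa
  · change StrictMono (π.2 ∘ (![a, b, c, d] : Fin 4 → _) ∘ ![1, 3, 0, 2])
    rw [Fin.strictMono_iff_lt_succ]; intro k; fin_cases k <;> simpa

theorem avoids3142_toDual_of_mem_av (h : π ∈ Av p2413) : Avoids3142 (toDual ∘ π.2) := by
  rintro a b c d hab hbc hcd ⟨h₁, h₂, h₃⟩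
  refine h (contains_of_strictMono (σ := p2413) ![a, b, c, d] ?_ ?_)
  · change StrictMono (![a, b, c, d] : Fin 4 → _)
    rw [Fin.strictMono_iff_lt_succ]; intro k; fin_cases k <;> simpa
  · change StrictMono (π.2 ∘ (![a, b, c, d] : Fin 4 → _) ∘ ![2, 0, 3, 1])
    rw [Fin.strictMono_iff_lt_succ]; intro k; fin_cases k <;> simpa

theorem SkewDecomp.exists_isSkewCut (h : SkewDecomp ρ) :
    ∃ d, 0 < d ∧ d < ρ.1 ∧ IsSkewCut ρ.2 0 ρ.1 d := by
  obtain ⟨σ, τ, hσ, hτ, rfl⟩ := h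
  refine ⟨σ.1, hσ, show σ.1 < σ.1 + τ.1 by omega, fun p q _ hp hq _ => ?_⟩
  obtain ⟨i, rfl⟩ : ∃ i : Fin σ.1, Fin.castAdd τ.1 i = p := ⟨⟨p, hp⟩, rfl⟩
  obtain ⟨j, rfl⟩ : ∃ j : Fin τ.1, Fin.natAdd σ.1 j = q :=
    ⟨⟨q - σ.1, by have := q.isLt; change (q : ℕ) < σ.1 + τ.1 at this; omega⟩,
      Fin.ext (by simp; omega)⟩
  rw [Fin.lt_def, pskew_apply_castAdd, pskew_apply_natAdd]
  omega

theorem p2413_not_isSkewCut : ∀ k, 0 < k → k < p2413.1 → ¬IsSkewCut p2413.2 0 p2413.1 k := by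
  intro k h₀ h₄
  change k < 4 at h₄
  interval_cases k <;> unfold IsSkewCut <;> decide

theorem p3142_not_isSkewCut : ∀ k, 0 < k → k < p3142.1 → ¬IsSkewCut p3142.2 0 p3142.1 k := by
  intro k h₀ h₄
  change k < 4 at h₄
  interval_cases k <;> unfold IsSkewCut <;> decide

-- `g` presents the points `S` of `π` as an element of `D[·]`: it numbers the blocks, each of which
-- satisfies `P`.
def IsSkewLabelling (π : PPerm) (S : Set (Fin π.1)) (P : Set (Fin π.1) → Prop)
    (g : Fin π.1 → ℕ) : Prop :=
  MonotoneOn g S ∧ (∀ p ∈ S, ∀ q ∈ S, g p < g q → π.2 q < π.2 p) ∧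
    ∀ p ∈ S, P (S ∩ {q | g q = g p})

theorem exists_isSkewLabelling_of_mem_inflate_decCl {X : Set PPerm}
    (h : π ∈ Inflate DecCl X) :
    ∃ g, IsSkewLabelling π Set.univ (fun T => ∃ τ ∈ X, PatternOf π T τ) g := by
  obtain ⟨σ, hσ, g, hmono, -, hpairs, hblocks⟩ := h
  rw [mem_decCl_iff] at hσ
  refine ⟨fun p => g p, fun p _ q _ hpq => hmono hpq, fun p _ q _ hpq => ?_, fun p _ => ?_⟩
  · have hne : g p ≠ g q := fun h => hpq.ne (congrArg Fin.val h)
    exact lt_of_le_of_ne (not_lt.mp fun h => ((hpairs p q hne).mp h).asymm (hσ _ _ hpq))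
      (π.2.injective.ne fun h => hne (h ▸ rfl))
  · simpa [Fin.val_inj] using hblocks (g p)

theorem mem_inflate_decCl_of_isSkewLabelling {X : Set PPerm} {g : Fin π.1 → ℕ}
    (hg : IsSkewLabelling π Set.univ (fun T => ∃ τ ∈ X, PatternOf π T τ) g) :
    π ∈ Inflate DecCl X := by
  obtain ⟨hmono, hcross, hX⟩ := hg
  classical
  let e := (Finset.univ.image g).orderIsoOfFin rfl
  let G p := e.symm ⟨g p, Finset.mem_image_of_mem g (Finset.mem_univ p)⟩
  have hlt : ∀ p q, G p < G q ↔ g p < g q := fun p q => e.symm.lt_iff_lt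
  have hle : ∀ p q, G p ≤ G q ↔ g p ≤ g q := fun p q => e.symm.le_iff_le
  have heq : ∀ p q, G p = G q ↔ g p = g q := fun p q => by
    rw [le_antisymm_iff, le_antisymm_iff, hle, hle]
  have hsurj : Surjective G := fun b => by
    obtain ⟨p, -, hp⟩ := Finset.mem_image.mp (e b).2
    exact ⟨p, e.symm_apply_eq.mpr (Subtype.ext hp)⟩
  refine ⟨⟨_, Fin.revPerm⟩, mem_decCl_iff.mpr fun i j hij => Fin.rev_lt_rev.mpr hij, G,
    fun p q hpq => (hle p q).mpr (hmono trivial trivial hpq), hsurj, fun p q hne => ?_,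
    fun b => ?_⟩
  · change π.2 p < π.2 q ↔ Fin.rev (G p) < Fin.rev (G q)
    rw [Fin.rev_lt_rev, hlt]
    refine ⟨fun h => ?_, fun h => hcross q trivial p trivial h⟩
    rcases lt_trichotomy (g p) (g q) with h' | h' | h'
    · exact absurd h (hcross p trivial q trivial h').asymm
    · exact absurd ((heq p q).mpr h') hne
    · exact h'
  · obtain ⟨p, rfl⟩ := hsurj b
    obtain ⟨τ, hτ, hpat⟩ := hX p trivial
    refine ⟨τ, hτ, ?_⟩
    convert hpat using 1
    ext q
    exact (heq q p).trans (and_iff_right trivial).symm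

section Labelling

variable {P : Set (Fin π.1) → Prop} {g : Fin π.1 → ℕ}

theorem IsSkewLabelling.eq_of_lt_of_lt (hg : IsSkewLabelling π Set.univ P g) {p q : Fin π.1}
    (hpq : p < q) (hv : π.2 p < π.2 q) : g q = g p :=
  le_antisymm (not_lt.mp fun h => (hg.2.1 _ trivial _ trivial h).asymm hv)
    (hg.1 trivial trivial hpq.le)

theorem IsSkewLabelling.exists_containsIn (hg : IsSkewLabelling π Set.univ P g)
    (hρ : 0 < ρ.1) (hρ' : ∀ k, 0 < k → k < ρ.1 → ¬IsSkewCut ρ.2 0 ρ.1 k) (h : Contains π ρ) :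
    ∃ p, ContainsIn π {q | g q = g p} ρ := by
  obtain ⟨f, hf, hfπ⟩ := h
  set i₀ : Fin ρ.1 := ⟨0, hρ⟩
  have hmono : Monotone (g ∘ f) := fun i j hij => hg.1 trivial trivial (hf.monotone hij)
  have hi₀ : ∀ i, g (f i₀) ≤ g (f i) := fun i => hmono (Fin.le_iff_val_le_val.mpr (Nat.zero_le _))
  obtain ⟨k, hk⟩ := exists_threshold (a := 0) (n := ρ.1) (P := fun i => g (f i₀) < g (f i))
    fun i j _ hij _ hi => hi.trans_le (hmono hij)
  have hk₀ : 0 < k := Nat.pos_of_ne_zero fun h₀ =>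
    lt_irrefl _ ((hk i₀ le_rfl hρ).mpr (h₀ ▸ le_rfl))
  suffices hall : ∀ i, g (f i) = g (f i₀) from ⟨f i₀, f, hf, hall, hfπ⟩
  intro i
  refine le_antisymm (not_lt.mp fun hlt => hρ' k hk₀ ?_ fun p q _ hpk hkq _ => ?_) (hi₀ i)
  · have := (hk i (Nat.zero_le _) i.isLt).mp hlt
    omega
  · have hp : g (f p) = g (f i₀) := le_antisymm (not_lt.mp fun h => by
      have := (hk p (Nat.zero_le _) p.isLt).mp h; omega) (hi₀ p)
    exact (hfπ q p).mpr (hg.2.1 _ trivial _ trivial (hp ▸ (hk q (Nat.zero_le _) q.isLt).mpr hkq))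

theorem IsSkewLabelling.glue (hP : ∀ T T', T ⊆ T' → P T' → P T) {a k b : ℕ}
    (hk : IsSkewCut π.2 a b k) {g₁ g₂ : Fin π.1 → ℕ}
    (h₁ : IsSkewLabelling π (Fin.val ⁻¹' Set.Ico a k) P g₁)
    (h₂ : IsSkewLabelling π (Fin.val ⁻¹' Set.Ico k b) P g₂) :
    ∃ g, IsSkewLabelling π (Fin.val ⁻¹' Set.Ico a b) P g := by
  set M := Finset.univ.sup g₁ + 1
  have hM : ∀ p, g₁ p < M := fun p => Nat.lt_succ_of_le (Finset.le_sup (Finset.mem_univ p))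
  refine ⟨fun p => if (p : ℕ) < k then g₁ p else M + g₂ p, ?_, ?_, ?_⟩
  · rintro p ⟨hap, hpb⟩ q ⟨haq, hqb⟩ hpq
    have hpq' := Fin.le_iff_val_le_val.mp hpq
    dsimp only
    split_ifs with hp hq hq
    · exact h₁.1 ⟨hap, hp⟩ ⟨haq, hq⟩ hpq
    · have := hM p; omega
    · omega
    · exact Nat.add_le_add_left (h₂.1 ⟨not_lt.mp hp, hpb⟩ ⟨not_lt.mp hq, hqb⟩ hpq) M
  · rintro p ⟨hap, hpb⟩ q ⟨haq, hqb⟩ hpq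
    dsimp only at hpq
    split_ifs at hpq with hp hq hq
    · exact h₁.2.1 p ⟨hap, hp⟩ q ⟨haq, hq⟩ hpq
    · exact hk p q hap hp (not_lt.mp hq) hqb
    · have := hM q; omega
    · exact h₂.2.1 p ⟨not_lt.mp hp, hpb⟩ q ⟨not_lt.mp hq, hqb⟩ (by omega)
  · rintro p ⟨hap, hpb⟩
    by_cases hp : (p : ℕ) < k
    · refine hP _ _ ?_ (h₁.2.2 p ⟨hap, hp⟩)
      rintro q ⟨⟨haq, hqb⟩, hq⟩
      simp only [Set.mem_ofPred_eq, hp, if_true] at hq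
      split_ifs at hq with hqk
      · exact ⟨⟨haq, hqk⟩, hq⟩
      · have := hM p; omega
    · refine hP _ _ ?_ (h₂.2.2 p ⟨not_lt.mp hp, hpb⟩)
      rintro q ⟨⟨haq, hqb⟩, hq⟩
      simp only [Set.mem_ofPred_eq, hp, if_false] at hq
      split_ifs at hq with hqk
      · have := hM q; omega
      · exact ⟨⟨not_lt.mp hqk, hqb⟩, Nat.add_left_cancel hq⟩

end Labelling

theorem not_containsIn_of_not_isSkewCut (hπ : π ∈ SepA) (hρ : SkewDecomp ρ)
    (h₁ : ¬Contains π (psum ρ pone)) (h₂ : ¬Contains π (psum pone ρ)) {a b : ℕ} (hb : b ≤ π.1)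
    (hnc : ∀ k, a < k → k < b → ¬IsSkewCut π.2 a b k) :
    ¬ContainsIn π (Fin.val ⁻¹' Set.Ico a b) ρ := by
  rintro ⟨f, hf, hfS, hfπ⟩
  obtain ⟨d, hd₀, hdρ, hd⟩ := hρ.exists_isSkewCut
  have hab : a + 2 ≤ b := by
    have hlt := Fin.lt_def.mp (hf (Fin.lt_def.mpr (show 0 < ρ.1 - 1 by omega) :
      (⟨0, by omega⟩ : Fin ρ.1) < ⟨ρ.1 - 1, by omega⟩))
    have := (hfS ⟨0, by omega⟩).1
    have := (hfS ⟨ρ.1 - 1, by omega⟩).2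
    omega
  obtain ⟨c, hac, hcb, hc | hc⟩ := exists_cut π.2.injective (avoids3142_of_mem_av hπ.2)
    (avoids3142_toDual_of_mem_av hπ.1) hab hb
  swap
  · exact hnc c hac hcb hc
  -- `k` is the number of points of the occurrence to the left of the sum cut `c`
  obtain ⟨k, hk⟩ := exists_threshold (a := 0) (n := ρ.1) (P := fun i => c ≤ (f i : ℕ))
    fun i j _ hij _ hi => hi.trans (hf.monotone hij)
  replace hk : ∀ i : Fin ρ.1, c ≤ (f i : ℕ) ↔ k ≤ i := fun i => hk i (Nat.zero_le _) i.isLt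
  rcases Nat.eq_zero_or_pos k with rfl | hk₀
  · refine h₂ (contains_pone_psum_iff.mpr ⟨⟨a, by omega⟩, f, hf, fun i => ?_, hfπ⟩)
    have hci := (hk i).mpr (Nat.zero_le _)
    exact ⟨Fin.lt_def.mpr (show a < f i by omega), hc _ _ le_rfl hac hci (hfS i).2⟩
  by_cases hkρ : ρ.1 ≤ k
  · refine h₁ (contains_psum_pone_iff.mpr ⟨⟨c, by omega⟩, f, hf, fun i => ?_, hfπ⟩)
    have hci : (f i : ℕ) < c := not_le.mp fun h => by have := (hk i).mp h; omega
    exact ⟨Fin.lt_def.mpr hci, hc _ _ (hfS i).1 hci le_rfl hcb⟩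
  · refine IsSumCut.not_isSkewCut (fun i j _ hik hkj _ => ?_) le_rfl hk₀ (by omega) hd₀ hdρ hd
    refine (hfπ i j).mpr (hc _ _ (hfS i).1 ?_ ((hk j).mpr hkj) (hfS j).2)
    exact not_le.mp fun h => by have := (hk i).mp h; omega

theorem exists_skewLabelling {F : Set PPerm} (hF : ∀ ρ ∈ F, SkewDecomp ρ) (hπ : π ∈ SepA)
    (h₁ : ∀ ρ ∈ F, ¬Contains π (psum ρ pone)) (h₂ : ∀ ρ ∈ F, ¬Contains π (psum pone ρ))
    {a b : ℕ} (hb : b ≤ π.1) :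
    ∃ g, IsSkewLabelling π (Fin.val ⁻¹' Set.Ico a b) (fun T => ∀ ρ ∈ F, ¬ContainsIn π T ρ) g := by
  induction hd : b - a using Nat.strong_induction_on generalizing a b with
  | _ d ih =>
  by_cases hcut : ∃ k, a < k ∧ k < b ∧ IsSkewCut π.2 a b k
  · obtain ⟨k, hak, hkb, hk⟩ := hcut
    obtain ⟨g₁, hg₁⟩ := ih (k - a) (by omega) (by omega) rfl
    obtain ⟨g₂, hg₂⟩ := ih (b - k) (by omega) hb rfl
    exact hg₁.glue (fun T T' hTT' hT' ρ hρ h => hT' ρ hρ (h.mono hTT')) hk hg₂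
  · push Not at hcut
    refine ⟨fun _ => 0, monotoneOn_const, fun _ _ _ _ h => absurd h (lt_irrefl 0),
      fun p _ ρ hρ h => ?_⟩
    exact not_containsIn_of_not_isSkewCut hπ (hF ρ hρ) (h₁ ρ hρ) (h₂ ρ hρ) hb
      hcut (h.mono Set.inter_subset_left)

theorem inflate_decCl_subset_avs (F : Set PPerm) :
    Inflate DecCl (Avs F) ⊆ Avs ((fun τ => psum τ pone) '' F ∪ (fun τ => psum pone τ) '' F) := by
  intro π hπ
  obtain ⟨g, hg⟩ := exists_isSkewLabelling_of_mem_inflate_decCl hπ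
  have hblock : ∀ p ρ, ContainsIn π {q | g q = g p} ρ → ∃ τ ∈ Avs F, Contains τ ρ := by
    intro p ρ h
    obtain ⟨τ, hτ, hpat⟩ := hg.2.2 p trivial
    exact ⟨τ, hτ, hpat.contains_iff.mpr (by simpa using h)⟩
  refine ⟨⟨fun h => ?_, fun h => ?_⟩, ?_⟩
  · obtain ⟨p, hp⟩ := hg.exists_containsIn (by decide) p2413_not_isSkewCut h
    obtain ⟨τ, hτ, hc⟩ := hblock p _ hp
    exact hτ.1.1 hc
  · obtain ⟨p, hp⟩ := hg.exists_containsIn (by decide) p3142_not_isSkewCut h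
    obtain ⟨τ, hτ, hc⟩ := hblock p _ hp
    exact hτ.1.2 hc
  · rintro _ (⟨ρ, hρ, rfl⟩ | ⟨ρ, hρ, rfl⟩) h
    · obtain ⟨m, hm⟩ := contains_psum_pone_iff.mp h
      obtain ⟨τ, hτ, hc⟩ := hblock m ρ (hm.mono fun p hp => (hg.eq_of_lt_of_lt hp.1 hp.2).symm)
      exact hτ.2 ρ hρ hc
    · obtain ⟨m, hm⟩ := contains_pone_psum_iff.mp h
      obtain ⟨τ, hτ, hc⟩ := hblock m ρ (hm.mono fun p hp => hg.eq_of_lt_of_lt hp.1 hp.2)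
      exact hτ.2 ρ hρ hc

theorem avs_subset_inflate_decCl {F : Set PPerm} (hF : ∀ τ ∈ F, SkewDecomp τ) :
    Avs ((fun τ => psum τ pone) '' F ∪ (fun τ => psum pone τ) '' F) ⊆ Inflate DecCl (Avs F) := by
  intro π hπ
  obtain ⟨g, hg⟩ := exists_skewLabelling (a := 0) hF hπ.1
    (fun ρ hρ => hπ.2 _ (.inl ⟨ρ, hρ, rfl⟩)) (fun ρ hρ => hπ.2 _ (.inr ⟨ρ, hρ, rfl⟩)) le_rfl
  rw [show Fin.val ⁻¹' Set.Ico 0 π.1 = Set.univ from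
    Set.eq_univ_of_forall fun p => ⟨Nat.zero_le _, p.isLt⟩] at hg
  refine mem_inflate_decCl_of_isSkewLabelling ⟨hg.1, hg.2.1, fun p _ => ?_⟩
  obtain ⟨τ, hτ⟩ := exists_patternOf π (Set.univ ∩ {q | g q = g p})
  exact ⟨τ, ⟨sepA_of_contains hπ.1 hτ.contains,
    fun ρ hρ hc => hg.2.2 p trivial ρ hρ (hτ.contains_iff.mp hc)⟩, hτ⟩

/-- For a set `F` of skew-decomposable permutations and `X = Avs(F)`,
`D[X] = Avs((F ⊕ 1) ∪ (1 ⊕ F))`. -/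
theorem stmt17 (F : Set PPerm) (hF : ∀ τ ∈ F, SkewDecomp τ) :
    Inflate DecCl (Avs F) =
      Avs ((fun τ => psum τ pone) '' F ∪ (fun τ => psum pone τ) '' F) :=
  (inflate_decCl_subset_avs F).antisymm (avs_subset_inflate_decCl hF)
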